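/- arXiv:1406.6257 — 2 statements merged into one kernel-verified Lean document; each statement's English description precedes it below -/
import Mathlib

section
/- Let 𝖧 be a real Hilbert space, let 𝖵 be a closed vector subspace of 𝖧, let β, ν > 0, and let 𝖿 : 𝖧 → ℝ be a differentiable, β-strongly convex function whose gradient ∇𝖿 is (1/ν)-Lipschitzian. Then the partial inverse (∇𝖿)_𝖵 is an everywhere defined single-valued operator that is α-cocoercive and α-strongly monotone with α = min{β, ν}/2; in particular, (∇𝖿)_𝖵 is (1/α)-Lipschitzian. -/
/-!
Write `P`, `Q` for the orthogonal projections onto `V` and `Vᗮ`. Restricting `f` to lines, the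
first-order characterisations of convexity show that `∇f` is `β`-strongly monotone and, by the
Baillon–Haddad argument (the descent lemma combined with the first-order inequality at the
gradient step `y - ν (∇f y - ∇f x)`), `ν`-cocoercive.

The swap `(x, y) ↦ (P x + Q y, P y + Q x)` maps the graph of `(∇f)_V` onto the graph of `∇f`
and preserves both `⟪x, y⟫` and `‖x‖² + ‖y‖²`. Hence on the graph of the partial inverse
`⟪x₁ - x₂, y₁ - y₂⟫ ≥ (min β ν / 2) (‖x₁ - x₂‖² + ‖y₁ - y₂‖²)`, which gives uniqueness,
cocoercivity and strong monotonicity at once. For existence at `x`, one needs `w ∈ Vᗮ` with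
`Q ∇f (P x + w) = Q x`; the map `w ↦ Q ∇f (P x + w)` on `Vᗮ` is again `β`-strongly monotone and
`ν`-cocoercive, so `w ↦ w - ν (Q ∇f (P x + w) - Q x)` is a contraction with constant
`√(1 - ν β)` and Banach's fixed point theorem applies.
-/

open scoped Pointwise RealInnerProductSpace

noncomputable section

variable {E : Type*} [NormedAddCommGroup E] [InnerProductSpace ℝ E] [CompleteSpace E]

def partialInv (V : Submodule ℝ E) [V.HasOrthogonalProjection] (A : E → Set E) :
    E → Set E := fun x =>
  {y | (V.orthogonalProjectionOnto y : E) + (Vᗮ.orthogonalProjectionOnto x : E)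
      ∈ A ((V.orthogonalProjectionOnto x : E) + (Vᗮ.orthogonalProjectionOnto y : E))}

open Set

section Operators

variable {F : Type*} [NormedAddCommGroup F] [InnerProductSpace ℝ F]

def IsStronglyMonotone (A : F → F) (β : ℝ) : Prop :=
  ∀ x y, β * ‖x - y‖ ^ 2 ≤ ⟪x - y, A x - A y⟫

def IsCocoercive (A : F → F) (ν : ℝ) : Prop :=
  ∀ x y, ν * ‖A x - A y‖ ^ 2 ≤ ⟪x - y, A x - A y⟫

lemma inner_sub_sub_eq_neg_add (x y a b : F) :
    ⟪x - y, a - b⟫ = -(⟪a, y - x⟫ + ⟪b, x - y⟫) := by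
  rw [real_inner_comm, inner_sub_left, ← neg_sub x y, inner_neg_right]
  ring

end Operators

section Smooth

variable {F : Type*} [NormedAddCommGroup F] [InnerProductSpace ℝ F] [CompleteSpace F]
  {f : F → ℝ} {f' : F → F}

lemma HasGradientAt.sub {g₁ g₂ : F → ℝ} {a b x : F} (h₁ : HasGradientAt g₁ a x)
    (h₂ : HasGradientAt g₂ b x) : HasGradientAt (fun z => g₁ z - g₂ z) (a - b) x := by
  rw [hasGradientAt_iff_hasFDerivAt, map_sub]
  exact h₁.hasFDerivAt.sub h₂.hasFDerivAt

lemma hasGradientAt_const_mul_norm_sq (c : ℝ) (x : F) :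
    HasGradientAt (fun z : F => c * ‖z‖ ^ 2) ((2 * c) • x) x := by
  rw [hasGradientAt_iff_hasFDerivAt]
  refine ((hasStrictFDerivAt_norm_sq x).hasFDerivAt.const_mul c).congr_fderiv ?_
  ext v
  simp only [smul_apply, coe_innerSL_apply, nsmul_eq_mul, Nat.cast_ofNat,
    smul_eq_mul, map_smul, InnerProductSpace.toDual_apply_apply]
  ring

lemma HasGradientAt.hasDerivAt_lineMap {g : F → ℝ} {g' x y : F} {t : ℝ}
    (hg : HasGradientAt g g' (AffineMap.lineMap x y t)) :
    HasDerivAt (fun s : ℝ => g (AffineMap.lineMap x y s)) ⟪g', y - x⟫ t := by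
  have hline : HasDerivAt (fun s : ℝ => AffineMap.lineMap x y s) (y - x) t := by
    simpa using AffineMap.hasDerivAt_lineMap (a := x) (b := y) (x := t)
  simpa [InnerProductSpace.toDual_apply_apply, Function.comp_def] using
    hg.hasFDerivAt.comp_hasDerivAt t hline

lemma add_inner_le_of_convexOn_lineMap {g : F → ℝ} {g' x y : F} (hg : HasGradientAt g g' x)
    (hconv : ConvexOn ℝ univ fun s : ℝ => g (AffineMap.lineMap x y s)) :
    g x + ⟪g', y - x⟫ ≤ g y := by
  have hd := HasGradientAt.hasDerivAt_lineMap (t := 0) (y := y) (by simpa using hg)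
  have := hconv.le_slope_of_hasDerivAt (mem_univ 0) (mem_univ 1) zero_lt_one hd
  simp only [slope_def_field, AffineMap.lineMap_apply_one, AffineMap.lineMap_apply_zero,
    sub_zero, div_one] at this
  linarith

lemma ConvexOn.add_inner_le {g : F → ℝ} {g' : F} (hconv : ConvexOn ℝ univ g) {x : F}
    (hg : HasGradientAt g g' x) (y : F) : g x + ⟪g', y - x⟫ ≤ g y :=
  add_inner_le_of_convexOn_lineMap hg (hconv.comp_affineMap (AffineMap.lineMap x y))

lemma add_inner_le_of_monotone_gradient {g : F → ℝ} {g' : F → F}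
    (hg : ∀ x, HasGradientAt g (g' x) x) (hmono : ∀ a b, 0 ≤ ⟪a - b, g' a - g' b⟫) (x y : F) :
    g x + ⟪g' x, y - x⟫ ≤ g y := by
  have hd : ∀ t : ℝ, HasDerivAt (fun s : ℝ => g (AffineMap.lineMap x y s))
      ⟪g' (AffineMap.lineMap x y t), y - x⟫ t := fun t => (hg _).hasDerivAt_lineMap
  refine add_inner_le_of_convexOn_lineMap (hg x) (Monotone.convexOn_univ_of_deriv
    (fun t => (hd t).differentiableAt) fun s t hst => ?_)
  rw [(hd s).deriv, (hd t).deriv]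
  have h := hmono (AffineMap.lineMap x y t) (AffineMap.lineMap x y s)
  have hsub : AffineMap.lineMap x y t - AffineMap.lineMap x y s = (t - s) • (y - x) := by
    simp only [AffineMap.lineMap_apply_module']; module
  rw [hsub, real_inner_smul_left, real_inner_comm] at h
  rw [← sub_nonneg, ← inner_sub_left]
  rcases hst.eq_or_lt with rfl | hlt
  · simp
  · exact (mul_nonneg_iff_of_pos_left (sub_pos.2 hlt)).1 h

lemma ConvexOn.inner_sub_gradient_nonneg (hconv : ConvexOn ℝ univ f)
    (hf : ∀ x, HasGradientAt f (f' x) x) (x y : F) : 0 ≤ ⟪x - y, f' x - f' y⟫ := by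
  have hxy := hconv.add_inner_le (hf x) y
  have hyx := hconv.add_inner_le (hf y) x
  rw [inner_sub_sub_eq_neg_add]
  linarith

lemma isStronglyMonotone_of_convexOn_sub_norm_sq {β : ℝ} (hf : ∀ x, HasGradientAt f (f' x) x)
    (hconv : ConvexOn ℝ univ fun x => f x - β / 2 * ‖x‖ ^ 2) : IsStronglyMonotone f' β := by
  intro x y
  have hg : ∀ z, HasGradientAt (fun x => f x - β / 2 * ‖x‖ ^ 2) (f' z - β • z) z := fun z => by
    simpa [mul_div_cancel₀] using (hf z).sub (hasGradientAt_const_mul_norm_sq (β / 2) z)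
  have hmono := hconv.inner_sub_gradient_nonneg hg x y
  rw [show f' x - β • x - (f' y - β • y) = (f' x - f' y) - β • (x - y) by module,
    inner_sub_right, real_inner_smul_right, real_inner_self_eq_norm_sq] at hmono
  linarith

lemma le_add_inner_add_norm_sq_of_lipschitz_gradient {L : ℝ}
    (hf : ∀ x, HasGradientAt f (f' x) x) (hlip : ∀ x y, ‖f' x - f' y‖ ≤ L * ‖x - y‖)
    (x y : F) : f y ≤ f x + ⟪f' x, y - x⟫ + L / 2 * ‖y - x‖ ^ 2 := by
  have hg : ∀ z, HasGradientAt (fun z => L / 2 * ‖z‖ ^ 2 - f z) (L • z - f' z) z := fun z => by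
    simpa [mul_div_cancel₀] using (hasGradientAt_const_mul_norm_sq (L / 2) z).sub (hf z)
  have hmono : ∀ a b : F, 0 ≤ ⟪a - b, (L • a - f' a) - (L • b - f' b)⟫ := fun a b => by
    rw [show L • a - f' a - (L • b - f' b) = L • (a - b) - (f' a - f' b) by module,
      inner_sub_right, real_inner_smul_right, real_inner_self_eq_norm_sq, sub_nonneg]
    calc ⟪a - b, f' a - f' b⟫ ≤ ‖a - b‖ * ‖f' a - f' b‖ := real_inner_le_norm _ _
      _ ≤ ‖a - b‖ * (L * ‖a - b‖) := by gcongr; exact hlip a b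
      _ = L * ‖a - b‖ ^ 2 := by ring
  have h := add_inner_le_of_monotone_gradient hg hmono x y
  rw [inner_sub_left, real_inner_smul_left] at h
  have hsq : ‖y - x‖ ^ 2 = ‖y‖ ^ 2 - 2 * ⟪x, y⟫ + ‖x‖ ^ 2 := by
    rw [norm_sub_sq_real, real_inner_comm]
  rw [inner_sub_right x y x, real_inner_self_eq_norm_sq] at h
  rw [hsq]
  linarith

lemma add_inner_add_norm_sq_le_of_lipschitz_gradient {ν : ℝ} (hν : 0 < ν)
    (hf : ∀ x, HasGradientAt f (f' x) x) (hmono : ∀ x y, 0 ≤ ⟪x - y, f' x - f' y⟫)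
    (hlip : ∀ x y, ‖f' x - f' y‖ ≤ 1 / ν * ‖x - y‖) (x y : F) :
    f x + ⟪f' x, y - x⟫ + ν / 2 * ‖f' y - f' x‖ ^ 2 ≤ f y := by
  set Δ := f' y - f' x
  set z := y - ν • Δ
  have hxz := add_inner_le_of_monotone_gradient hf hmono x z
  have hzy := le_add_inner_add_norm_sq_of_lipschitz_gradient hf hlip y z
  have hzx : z - x = (y - x) - ν • Δ := by module
  have hzy' : z - y = -(ν • Δ) := by module
  rw [hzx, inner_sub_right, real_inner_smul_right] at hxz
  rw [hzy', inner_neg_right, real_inner_smul_right, norm_neg, norm_smul, Real.norm_eq_abs,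
    abs_of_pos hν] at hzy
  have hΔ : ν * ⟪f' y, Δ⟫ - ν * ⟪f' x, Δ⟫ = ν * ‖Δ‖ ^ 2 := by
    rw [← mul_sub, ← inner_sub_left, real_inner_self_eq_norm_sq]
  have hν' : 1 / ν / 2 * (ν * ‖Δ‖) ^ 2 = ν / 2 * ‖Δ‖ ^ 2 := by field_simp
  linarith

lemma isCocoercive_of_lipschitz_gradient {ν : ℝ} (hν : 0 < ν)
    (hf : ∀ x, HasGradientAt f (f' x) x) (hmono : ∀ x y, 0 ≤ ⟪x - y, f' x - f' y⟫)
    (hlip : ∀ x y, ‖f' x - f' y‖ ≤ 1 / ν * ‖x - y‖) : IsCocoercive f' ν := by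
  intro x y
  have hxy := add_inner_add_norm_sq_le_of_lipschitz_gradient hν hf hmono hlip x y
  have hyx := add_inner_add_norm_sq_le_of_lipschitz_gradient hν hf hmono hlip y x
  rw [norm_sub_rev] at hxy
  rw [inner_sub_sub_eq_neg_add]
  linarith

end Smooth

section MonotoneOperators

variable {F : Type*} [NormedAddCommGroup F] [InnerProductSpace ℝ F] {A : F → F} {β ν : ℝ}

lemma norm_le_inv_mul_of_mul_norm_sq_le_inner {α : ℝ} (hα : 0 < α) {u v : F}
    (h : α * ‖v‖ ^ 2 ≤ ⟪u, v⟫) : ‖v‖ ≤ α⁻¹ * ‖u‖ := by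
  rw [le_inv_mul_iff₀ hα]
  rcases (norm_nonneg v).eq_or_lt with hv | hv
  · simp [← hv]
  · refine le_of_mul_le_mul_right ?_ hv
    calc α * ‖v‖ * ‖v‖ = α * ‖v‖ ^ 2 := by ring
      _ ≤ ⟪u, v⟫ := h
      _ ≤ ‖u‖ * ‖v‖ := real_inner_le_norm u v

lemma IsCocoercive.lipschitz (hA : IsCocoercive A ν) (hν : 0 < ν) (x y : F) :
    ‖A x - A y‖ ≤ ν⁻¹ * ‖x - y‖ :=
  norm_le_inv_mul_of_mul_norm_sq_le_inner hν (hA x y)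

lemma IsStronglyMonotone.surjective [CompleteSpace F] (hβ : 0 < β) (hν : 0 < ν)
    (hA : IsStronglyMonotone A β) (hA' : IsCocoercive A ν) : Function.Surjective A := by
  intro q
  set Φ : F → F := fun w => w - ν • (A w - q)
  have hsq : ∀ w₁ w₂, ‖Φ w₁ - Φ w₂‖ ^ 2 ≤ (1 - ν * β) * ‖w₁ - w₂‖ ^ 2 := fun w₁ w₂ => by
    have hΦ : Φ w₁ - Φ w₂ = (w₁ - w₂) - ν • (A w₁ - A w₂) := by simp only [Φ]; module
    rw [hΦ, norm_sub_sq_real, real_inner_smul_right, norm_smul, Real.norm_eq_abs, abs_of_pos hν,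
      mul_pow]
    nlinarith [hA w₁ w₂, hA' w₁ w₂]
  obtain ⟨k, hk⟩ : ∃ k : NNReal, (k : ℝ) = √(1 - ν * β) := ⟨⟨_, Real.sqrt_nonneg _⟩, rfl⟩
  have hk1 : k < 1 := by
    rw [← NNReal.coe_lt_coe, hk, NNReal.coe_one, Real.sqrt_lt' one_pos]
    nlinarith [mul_pos hν hβ]
  have hΦ : ContractingWith k Φ := by
    refine ⟨hk1, LipschitzWith.of_dist_le_mul fun w₁ w₂ => ?_⟩
    rw [dist_eq_norm, dist_eq_norm, hk, ← Real.sqrt_sq (norm_nonneg (Φ w₁ - Φ w₂)),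
      ← Real.sqrt_sq (norm_nonneg (w₁ - w₂)), ← Real.sqrt_mul' _ (sq_nonneg _)]
    exact Real.sqrt_le_sqrt (hsq w₁ w₂)
  refine ⟨ContractingWith.fixedPoint Φ hΦ, ?_⟩
  have hfix : Φ (ContractingWith.fixedPoint Φ hΦ) = ContractingWith.fixedPoint Φ hΦ :=
    ContractingWith.fixedPoint_isFixedPt hΦ
  simpa [Φ, hν.ne', sub_eq_zero] using hfix

variable (K : Submodule ℝ F) [K.HasOrthogonalProjection]

lemma IsStronglyMonotone.orthogonalProjectionOnto_comp (hA : IsStronglyMonotone A β) (p : F) :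
    IsStronglyMonotone (fun w : K => K.orthogonalProjectionOnto (A (p + w))) β := by
  intro w₁ w₂
  rw [← map_sub, Submodule.inner_orthogonalProjectionOnto_eq_of_mem_left]
  simpa using hA (p + w₁) (p + w₂)

lemma IsCocoercive.orthogonalProjectionOnto_comp (hA : IsCocoercive A ν) (hν : 0 ≤ ν) (p : F) :
    IsCocoercive (fun w : K => K.orthogonalProjectionOnto (A (p + w))) ν := by
  intro w₁ w₂
  rw [← map_sub, Submodule.inner_orthogonalProjectionOnto_eq_of_mem_left]
  calc ν * ‖K.orthogonalProjectionOnto (A (p + w₁) - A (p + w₂))‖ ^ 2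
      ≤ ν * ‖A (p + w₁) - A (p + w₂)‖ ^ 2 := by
        gcongr; exact K.norm_orthogonalProjectionOnto_apply_le _
    _ ≤ ⟪(p + w₁) - (p + w₂), A (p + w₁) - A (p + w₂)⟫ := hA _ _
    _ = ⟪((w₁ - w₂ : K) : F), A (p + w₁) - A (p + w₂)⟫ := by simp

end MonotoneOperators

section Swap

variable {F : Type*} [NormedAddCommGroup F] [InnerProductSpace ℝ F]
  (K : Submodule ℝ F) [K.HasOrthogonalProjection]

lemma inner_starProjection_orthogonal (u v : F) : ⟪K.starProjection u, Kᗮ.starProjection v⟫ = 0 :=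
  Submodule.inner_right_of_mem_orthogonal (K.starProjection_apply_mem u)
    (Kᗮ.starProjection_apply_mem v)

lemma inner_starProjection_swap (u v : F) :
    ⟪K.starProjection u + Kᗮ.starProjection v, K.starProjection v + Kᗮ.starProjection u⟫ =
      ⟪u, v⟫ := by
  conv_rhs => rw [← K.starProjection_add_starProjection_orthogonal u,
    ← K.starProjection_add_starProjection_orthogonal v]
  simp only [inner_add_left, inner_add_right, inner_starProjection_orthogonal,
    real_inner_comm (K.starProjection _) (Kᗮ.starProjection _)]
  rw [real_inner_comm (Kᗮ.starProjection u)]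

lemma norm_sq_starProjection_swap (u v : F) :
    ‖K.starProjection u + Kᗮ.starProjection v‖ ^ 2 +
        ‖K.starProjection v + Kᗮ.starProjection u‖ ^ 2 = ‖u‖ ^ 2 + ‖v‖ ^ 2 := by
  rw [norm_add_sq_real, norm_add_sq_real, inner_starProjection_orthogonal,
    inner_starProjection_orthogonal, Submodule.norm_sq_eq_add_norm_sq_starProjection u K,
    Submodule.norm_sq_eq_add_norm_sq_starProjection v K]
  ring

end Swap

section PartialInverse

variable {H : Type*} [NormedAddCommGroup H] [InnerProductSpace ℝ H]
  (V : Submodule ℝ H) [V.HasOrthogonalProjection] {A : H → H} {β ν : ℝ}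

lemma mem_partialInv_singleton_iff {x y : H} :
    y ∈ partialInv V (fun w => {A w}) x ↔
      V.starProjection y + Vᗮ.starProjection x = A (V.starProjection x + Vᗮ.starProjection y) := by
  simp only [partialInv, Set.mem_ofPred_eq, Set.mem_singleton_iff,
    Submodule.starProjection_apply]

lemma partialInv_estimate (hA : IsStronglyMonotone A β) (hA' : IsCocoercive A ν)
    {x₁ x₂ y₁ y₂ : H} (h₁ : y₁ ∈ partialInv V (fun w => {A w}) x₁)
    (h₂ : y₂ ∈ partialInv V (fun w => {A w}) x₂) :
    min β ν / 2 * (‖x₁ - x₂‖ ^ 2 + ‖y₁ - y₂‖ ^ 2) ≤ ⟪x₁ - x₂, y₁ - y₂⟫ := by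
  rw [mem_partialInv_singleton_iff] at h₁ h₂
  set a₁ := V.starProjection x₁ + Vᗮ.starProjection y₁
  set a₂ := V.starProjection x₂ + Vᗮ.starProjection y₂
  have ha : a₁ - a₂ = V.starProjection (x₁ - x₂) + Vᗮ.starProjection (y₁ - y₂) := by
    simp only [a₁, a₂, map_sub]; abel
  have hAa : A a₁ - A a₂ = V.starProjection (y₁ - y₂) + Vᗮ.starProjection (x₁ - x₂) := by
    rw [← h₁, ← h₂, map_sub, map_sub]; abel
  have hinner : ⟪a₁ - a₂, A a₁ - A a₂⟫ = ⟪x₁ - x₂, y₁ - y₂⟫ := by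
    rw [ha, hAa, inner_starProjection_swap]
  have hnorm : ‖a₁ - a₂‖ ^ 2 + ‖A a₁ - A a₂‖ ^ 2 = ‖x₁ - x₂‖ ^ 2 + ‖y₁ - y₂‖ ^ 2 := by
    rw [ha, hAa, norm_sq_starProjection_swap]
  rw [← hinner, ← hnorm]
  calc min β ν / 2 * (‖a₁ - a₂‖ ^ 2 + ‖A a₁ - A a₂‖ ^ 2)
      = (min β ν * ‖a₁ - a₂‖ ^ 2 + min β ν * ‖A a₁ - A a₂‖ ^ 2) / 2 := by ring
    _ ≤ (β * ‖a₁ - a₂‖ ^ 2 + ν * ‖A a₁ - A a₂‖ ^ 2) / 2 := by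
      gcongr
      exacts [min_le_left β ν, min_le_right β ν]
    _ ≤ ⟪a₁ - a₂, A a₁ - A a₂⟫ := by linarith [hA a₁ a₂, hA' a₁ a₂]

lemma exists_mem_partialInv [CompleteSpace H] (hβ : 0 < β) (hν : 0 < ν)
    (hA : IsStronglyMonotone A β) (hA' : IsCocoercive A ν) (x : H) :
    ∃ y, y ∈ partialInv V (fun w => {A w}) x := by
  obtain ⟨w, hw⟩ := (hA.orthogonalProjectionOnto_comp Vᗮ (V.starProjection x)).surjective hβ hν
    (hA'.orthogonalProjectionOnto_comp Vᗮ hν.le (V.starProjection x))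
    (Vᗮ.orthogonalProjectionOnto x)
  set a := V.starProjection x + w
  refine ⟨V.starProjection (A a) + w, ?_⟩
  have hQx : Vᗮ.starProjection x = Vᗮ.starProjection (A a) := by
    simp only [Submodule.starProjection_apply, ← hw, a]
  rw [mem_partialInv_singleton_iff, map_add, map_add, V.starProjection_apply_eq_zero_iff.2 w.2,
    Vᗮ.starProjection_eq_self_iff.2 w.2, add_zero,
    V.starProjection_eq_self_iff.2 (V.starProjection_apply_mem _),
    Submodule.starProjection_orthogonal_apply_eq_zero (V.starProjection_apply_mem _), zero_add,
    hQx, Submodule.starProjection_add_starProjection_orthogonal]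

theorem exists_partialInv_eq_singleton [CompleteSpace H] (hβ : 0 < β) (hν : 0 < ν)
    (hA : IsStronglyMonotone A β) (hA' : IsCocoercive A ν) :
    ∃ T : H → H, (∀ x, partialInv V (fun w => {A w}) x = {T x}) ∧
      IsCocoercive T (min β ν / 2) ∧ IsStronglyMonotone T (min β ν / 2) := by
  choose T hT using exists_mem_partialInv V hβ hν hA hA'
  have hα : 0 < min β ν / 2 := by positivity
  have hest x y := partialInv_estimate V hA hA' (hT x) (hT y)
  refine ⟨T, fun x => Set.eq_singleton_iff_unique_mem.2 ⟨hT x, fun y hy => ?_⟩,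
    fun x y => ?_, fun x y => ?_⟩
  · have h := partialInv_estimate V hA hA' hy (hT x)
    rw [sub_self, norm_zero, inner_zero_left] at h
    have : ‖y - T x‖ ^ 2 ≤ 0 := by nlinarith
    simpa [sub_eq_zero] using this
  · nlinarith [hest x y, sq_nonneg ‖x - y‖]
  · nlinarith [hest x y, sq_nonneg ‖T x - T y‖]

end PartialInverse

theorem stmt13 (V : Submodule ℝ E) [CompleteSpace V] (β ν : ℝ)
    (hβ : 0 < β) (hν : 0 < ν)
    (f : E → ℝ) (f' : E → E)
    (hdiff : ∀ x : E, HasGradientAt f (f' x) x)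
    (hconv : ConvexOn ℝ Set.univ (fun x => f x - β / 2 * ‖x‖ ^ 2))
    (hlip : ∀ x y : E, ‖f' x - f' y‖ ≤ (1 / ν) * ‖x - y‖) :
    ∃ T : E → E,
      (∀ x : E, partialInv V (fun w => {f' w}) x = {T x}) ∧
      (∀ x y : E, min β ν / 2 * ‖T x - T y‖ ^ 2 ≤ ⟪x - y, T x - T y⟫) ∧
      (∀ x y : E, min β ν / 2 * ‖x - y‖ ^ 2 ≤ ⟪x - y, T x - T y⟫) ∧
      (∀ x y : E, ‖T x - T y‖ ≤ (min β ν / 2)⁻¹ * ‖x - y‖) := by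
  have hSM := isStronglyMonotone_of_convexOn_sub_norm_sq hdiff hconv
  have hmono x y : 0 ≤ ⟪x - y, f' x - f' y⟫ := (mul_nonneg hβ.le (sq_nonneg _)).trans (hSM x y)
  have hCO := isCocoercive_of_lipschitz_gradient hν hdiff hmono hlip
  obtain ⟨T, hT, hTco, hTsm⟩ := exists_partialInv_eq_singleton V hβ hν hSM hCO
  exact ⟨T, hT, hTco, hTsm, hTco.lipschitz (by positivity)⟩
end
end

section
/- Let 𝖧 be a real Hilbert space, let 𝖵 be a closed vector subspace of 𝖧, let β > 0, and let 𝖣 : 𝖧 → 𝖧 be a bounded linear operator satisfying ⟨x, 𝖣x⟩ ≥ β‖x‖² for every x ∈ 𝖧. Then, with ν = β/‖𝖣‖², the partial inverse 𝖣_𝖵 is an everywhere defined single-valued operator that is α-cocoercive and α-strongly monotone with α = min{β, ν}/2; in particular, 𝖣_𝖵 is (1/α)-Lipschitzian. -/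
/-!
Along the graph of the partial inverse, `u = P_V x + P_{V⊥} y` parametrises everything:
`x = P_V u + P_{V⊥} D u`, `y = P_V D u + P_{V⊥} u`, and orthogonality kills the cross terms in
`⟪x, y⟫`, leaving `⟪u, D u⟫ ≥ β‖u‖²`. Coercivity makes `u ↦ x` injective, and Lax–Milgram for
the compression of `D` to `V⊥` makes it surjective, so `D_V` is single-valued and everywhere
defined. Since `‖x‖², ‖y‖² ≤ (1 + ‖D‖²)‖u‖²` and `α (1 + ‖D‖²) ≤ β`, both `α‖x‖²` and `α‖y‖²`
are bounded by `⟪x, y⟫`; by linearity this applies to differences, and Cauchy–Schwarz turns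
cocoercivity into the Lipschitz bound.
-/

open scoped Pointwise RealInnerProductSpace

noncomputable section

variable {E : Type*} [NormedAddCommGroup E] [InnerProductSpace ℝ E] [CompleteSpace E]

open Submodule

section Projections

variable {F : Type*} [NormedAddCommGroup F] [InnerProductSpace ℝ F]
  (V : Submodule ℝ F) [V.HasOrthogonalProjection] (x : F)

theorem starProjection_starProjection :
    V.starProjection (V.starProjection x) = V.starProjection x :=
  starProjection_eq_self_iff.mpr (V.starProjection_apply_mem x)

theorem starProjection_starProjection_orthogonal : V.starProjection (Vᗮ.starProjection x) = 0 :=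
  V.starProjection_apply_eq_zero_iff.mpr (Vᗮ.starProjection_apply_mem x)

theorem starProjection_orthogonal_starProjection : Vᗮ.starProjection (V.starProjection x) = 0 :=
  Vᗮ.starProjection_apply_eq_zero_iff.mpr <|
    V.le_orthogonal_orthogonal (V.starProjection_apply_mem x)

theorem inner_starProjection_starProjection_orthogonal (y : F) :
    ⟪V.starProjection x, Vᗮ.starProjection y⟫ = 0 :=
  inner_right_of_mem_orthogonal (V.starProjection_apply_mem x) (Vᗮ.starProjection_apply_mem y)

theorem inner_starProjection_orthogonal_starProjection (y : F) :
    ⟪Vᗮ.starProjection x, V.starProjection y⟫ = 0 :=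
  inner_left_of_mem_orthogonal (V.starProjection_apply_mem y) (Vᗮ.starProjection_apply_mem x)

end Projections

section Coercive

variable {F : Type*} [NormedAddCommGroup F] [InnerProductSpace ℝ F] {D : F →L[ℝ] F} {β : ℝ}

theorem le_opNorm_of_coercive [Nontrivial F] (hD : ∀ x, β * ‖x‖ ^ 2 ≤ ⟪x, D x⟫) : β ≤ ‖D‖ := by
  obtain ⟨x, hx⟩ := exists_ne (0 : F)
  have hx' : 0 < ‖x‖ ^ 2 := by positivity
  refine le_of_mul_le_mul_right ?_ hx'
  calc β * ‖x‖ ^ 2 ≤ ⟪x, D x⟫ := hD x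
    _ ≤ ‖x‖ * ‖D x‖ := real_inner_le_norm _ _
    _ ≤ ‖x‖ * (‖D‖ * ‖x‖) := by gcongr; exact D.le_opNorm x
    _ = ‖D‖ * ‖x‖ ^ 2 := by ring

theorem exists_mem_starProjection_apply_eq_of_coercive (K : Submodule ℝ F) [CompleteSpace K]
    (hβ : 0 < β) (hD : ∀ x, β * ‖x‖ ^ 2 ≤ ⟪x, D x⟫) {r : F} (hr : r ∈ K) :
    ∃ w ∈ K, K.starProjection (D w) = r := by
  have hB : IsCoercive ((innerSL ℝ).bilinearComp (D ∘L K.subtypeL) K.subtypeL) :=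
    ⟨β, hβ, fun w => by simpa [sq, mul_assoc, real_inner_comm] using hD w⟩
  set w := hB.continuousLinearEquivOfBilin.symm ⟨r, hr⟩
  refine ⟨w, w.2, eq_starProjection_of_mem_of_inner_eq_zero hr fun z hz => ?_⟩
  have := hB.continuousLinearEquivOfBilin_apply w ⟨z, hz⟩
  simp only [w, ContinuousLinearEquiv.apply_symm_apply, coe_inner,
    ContinuousLinearMap.bilinearComp_apply, ContinuousLinearMap.comp_apply, coe_subtypeL,
    subtype_apply, coe_innerSL_apply] at this
  rw [inner_sub_left, this, sub_self]

end Coercive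

section Graph

variable {F : Type*} [NormedAddCommGroup F] [InnerProductSpace ℝ F]
  (V : Submodule ℝ F) [V.HasOrthogonalProjection]

def partialInvGraphFst (D : F → F) (u : F) : F := V.starProjection u + Vᗮ.starProjection (D u)

def partialInvGraphSnd (D : F → F) (u : F) : F := V.starProjection (D u) + Vᗮ.starProjection u

theorem mem_partialInv_iff [CompleteSpace F] (D : F → F) {x y : F} :
    y ∈ partialInv V (fun w => {D w}) x ↔
      ∃ u, partialInvGraphFst V D u = x ∧ partialInvGraphSnd V D u = y := by
  simp only [partialInv, coe_orthogonalProjectionOnto_apply, Set.mem_ofPred_eq,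
    Set.mem_singleton_iff, partialInvGraphFst, partialInvGraphSnd]
  constructor
  · intro hy
    refine ⟨V.starProjection x + Vᗮ.starProjection y, ?_, ?_⟩ <;>
      simp only [← hy, map_add, starProjection_starProjection,
        starProjection_starProjection_orthogonal, starProjection_orthogonal_starProjection,
        add_zero, zero_add, V.starProjection_add_starProjection_orthogonal]
  · rintro ⟨u, rfl, rfl⟩
    simp only [map_add, starProjection_starProjection, starProjection_starProjection_orthogonal,
      starProjection_orthogonal_starProjection, add_zero, zero_add,
      V.starProjection_add_starProjection_orthogonal]

theorem inner_partialInvGraphFst_partialInvGraphSnd (D : F → F) (u : F) :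
    ⟪partialInvGraphFst V D u, partialInvGraphSnd V D u⟫ = ⟪u, D u⟫ := by
  have hP : ⟪V.starProjection u, V.starProjection (D u)⟫ = ⟪u, V.starProjection (D u)⟫ := by
    rw [inner_starProjection_left_eq_right, starProjection_starProjection]
  have hQ : ⟪Vᗮ.starProjection (D u), Vᗮ.starProjection u⟫ = ⟪u, Vᗮ.starProjection (D u)⟫ := by
    rw [real_inner_comm, inner_starProjection_left_eq_right, starProjection_starProjection]
  rw [partialInvGraphFst, partialInvGraphSnd, inner_add_left, inner_add_right, inner_add_right,
    hP, hQ, inner_starProjection_starProjection_orthogonal,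
    inner_starProjection_orthogonal_starProjection, add_zero, zero_add, ← inner_add_right,
    V.starProjection_add_starProjection_orthogonal]

theorem norm_partialInvGraphFst_sq_le (D : F → F) (u : F) :
    ‖partialInvGraphFst V D u‖ ^ 2 ≤ ‖u‖ ^ 2 + ‖D u‖ ^ 2 := by
  rw [partialInvGraphFst, norm_add_sq_real, inner_starProjection_starProjection_orthogonal,
    mul_zero, add_zero]
  gcongr <;> apply norm_starProjection_apply_le

theorem norm_partialInvGraphSnd_sq_le (D : F → F) (u : F) :
    ‖partialInvGraphSnd V D u‖ ^ 2 ≤ ‖u‖ ^ 2 + ‖D u‖ ^ 2 := by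
  rw [partialInvGraphSnd, norm_add_sq_real, inner_starProjection_starProjection_orthogonal,
    mul_zero, add_zero, add_comm (‖u‖ ^ 2)]
  gcongr <;> apply norm_starProjection_apply_le

variable {V} (D : F →L[ℝ] F)

theorem partialInvGraphFst_sub (u v : F) :
    partialInvGraphFst V D (u - v) = partialInvGraphFst V D u - partialInvGraphFst V D v := by
  simp only [partialInvGraphFst, map_sub]
  abel

theorem partialInvGraphSnd_sub (u v : F) :
    partialInvGraphSnd V D (u - v) = partialInvGraphSnd V D u - partialInvGraphSnd V D v := by
  simp only [partialInvGraphSnd, map_sub]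
  abel

variable {D} {β : ℝ} (hβ : 0 < β) (hD : ∀ x, β * ‖x‖ ^ 2 ≤ ⟪x, D x⟫)
include hβ hD

theorem partialInvGraphFst_injective : Function.Injective (partialInvGraphFst V D) := by
  intro u v huv
  have h := hD (u - v)
  rw [← inner_partialInvGraphFst_partialInvGraphSnd V, partialInvGraphFst_sub, huv, sub_self,
    inner_zero_left] at h
  have : ‖u - v‖ ^ 2 ≤ 0 := nonpos_of_mul_nonpos_right h hβ
  simpa [sub_eq_zero] using this

theorem partialInvGraphFst_surjective [CompleteSpace Vᗮ] :
    Function.Surjective (partialInvGraphFst V D) := by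
  intro x
  obtain ⟨w, hw, hDw⟩ := exists_mem_starProjection_apply_eq_of_coercive Vᗮ hβ hD
    (sub_mem (Vᗮ.starProjection_apply_mem x) (Vᗮ.starProjection_apply_mem (D (V.starProjection x))))
  refine ⟨V.starProjection x + w, ?_⟩
  rw [partialInvGraphFst, map_add, map_add, map_add, hDw, starProjection_starProjection,
    (V.starProjection_apply_eq_zero_iff).mpr hw]
  simp

theorem partialInv_eq_singleton [CompleteSpace F] {u x : F}
    (hu : partialInvGraphFst V D u = x) :
    partialInv V (fun w => {D w}) x = {partialInvGraphSnd V D u} := by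
  ext y
  rw [mem_partialInv_iff, Set.mem_singleton_iff]
  constructor
  · rintro ⟨v, hv, rfl⟩
    rw [partialInvGraphFst_injective hβ hD (hv.trans hu.symm)]
  · rintro rfl
    exact ⟨u, hu, rfl⟩

end Graph

section Estimates

variable {F : Type*} [NormedAddCommGroup F] [InnerProductSpace ℝ F]

theorem min_div_two_mul_one_add_le {β t : ℝ} (hβ : 0 ≤ β) (ht : 0 ≤ t) :
    min β (β / t) / 2 * (1 + t) ≤ β := by
  have hmin_t : min β (β / t) * t ≤ β := by
    rcases ht.eq_or_lt with rfl | ht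
    · simpa using hβ
    · calc min β (β / t) * t ≤ β / t * t := by gcongr; exact min_le_right _ _
        _ = β := div_mul_cancel₀ β ht.ne'
  linarith [min_le_left β (β / t)]

theorem mul_norm_sq_le_inner_apply {D : F →L[ℝ] F} {α β : ℝ} (hα : 0 ≤ α)
    (hαβ : α * (1 + ‖D‖ ^ 2) ≤ β) (hD : ∀ x, β * ‖x‖ ^ 2 ≤ ⟪x, D x⟫) {a u : F}
    (ha : ‖a‖ ^ 2 ≤ ‖u‖ ^ 2 + ‖D u‖ ^ 2) : α * ‖a‖ ^ 2 ≤ ⟪u, D u⟫ := by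
  have hDu : ‖D u‖ ^ 2 ≤ ‖D‖ ^ 2 * ‖u‖ ^ 2 := by
    rw [← mul_pow]
    gcongr
    exact D.le_opNorm u
  calc α * ‖a‖ ^ 2 ≤ α * ((1 + ‖D‖ ^ 2) * ‖u‖ ^ 2) := by gcongr; linarith
    _ = α * (1 + ‖D‖ ^ 2) * ‖u‖ ^ 2 := by ring
    _ ≤ β * ‖u‖ ^ 2 := by gcongr
    _ ≤ ⟪u, D u⟫ := hD u

theorem norm_le_inv_mul_norm_of_mul_norm_sq_le_inner {α : ℝ} (hα : 0 < α) {a b : F}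
    (h : α * ‖a‖ ^ 2 ≤ ⟪b, a⟫) : ‖a‖ ≤ α⁻¹ * ‖b‖ := by
  rw [le_inv_mul_iff₀ hα]
  rcases (norm_nonneg a).eq_or_lt with ha | ha
  · rw [← ha, mul_zero]
    exact norm_nonneg b
  · refine le_of_mul_le_mul_right ?_ ha
    calc α * ‖a‖ * ‖a‖ = α * ‖a‖ ^ 2 := by ring
      _ ≤ ⟪b, a⟫ := h
      _ ≤ ‖b‖ * ‖a‖ := real_inner_le_norm b a

end Estimates

theorem stmt14 (V : Submodule ℝ E) [CompleteSpace V] (D : E →L[ℝ] E) (β : ℝ)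
    (hβ : 0 < β) (hD : ∀ x : E, β * ‖x‖ ^ 2 ≤ ⟪x, D x⟫) :
    ∃ T : E → E,
      (∀ x : E, partialInv V (fun w => {D w}) x = {T x}) ∧
      (∀ x y : E, min β (β / ‖D‖ ^ 2) / 2 * ‖T x - T y‖ ^ 2 ≤ ⟪x - y, T x - T y⟫) ∧
      (∀ x y : E, min β (β / ‖D‖ ^ 2) / 2 * ‖x - y‖ ^ 2 ≤ ⟪x - y, T x - T y⟫) ∧
      (∀ x y : E, ‖T x - T y‖ ≤ (min β (β / ‖D‖ ^ 2) / 2)⁻¹ * ‖x - y‖) := by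
  set α := min β (β / ‖D‖ ^ 2) / 2
  have hα : 0 ≤ α := by positivity
  have hαβ : α * (1 + ‖D‖ ^ 2) ≤ β := min_div_two_mul_one_add_le hβ.le (sq_nonneg _)
  obtain ⟨u, hu⟩ : ∃ u : E → E, ∀ x, partialInvGraphFst V D (u x) = x :=
    ⟨_, Function.rightInverse_surjInv (partialInvGraphFst_surjective hβ hD)⟩
  set T := fun x => partialInvGraphSnd V D (u x)
  have hsub : ∀ x y, x - y = partialInvGraphFst V D (u x - u y) ∧
      T x - T y = partialInvGraphSnd V D (u x - u y) := fun x y => by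
    simp only [T, partialInvGraphFst_sub, partialInvGraphSnd_sub, hu, and_self]
  have hcoco : ∀ x y, α * ‖T x - T y‖ ^ 2 ≤ ⟪x - y, T x - T y⟫ := fun x y => by
    rw [(hsub x y).1, (hsub x y).2, inner_partialInvGraphFst_partialInvGraphSnd]
    exact mul_norm_sq_le_inner_apply hα hαβ hD (norm_partialInvGraphSnd_sq_le V D _)
  refine ⟨T, fun x => partialInv_eq_singleton hβ hD (hu x), hcoco, fun x y => ?_, fun x y => ?_⟩
  · rw [(hsub x y).1, (hsub x y).2, inner_partialInvGraphFst_partialInvGraphSnd]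
    exact mul_norm_sq_le_inner_apply hα hαβ hD (norm_partialInvGraphFst_sq_le V D _)
  · rcases subsingleton_or_nontrivial E with hE | hE
    · simp [Subsingleton.elim x y]
    · have : 0 < ‖D‖ := hβ.trans_le (le_opNorm_of_coercive hD)
      exact norm_le_inv_mul_norm_of_mul_norm_sq_le_inner (by positivity) (hcoco x y)
end
end
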